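/- Let σ = (Z,P) be a stability condition on a triangulated category D. Then A := P((0,1]) is the heart of a bounded t-structure on D, the central charge Z defines a stability function on A which has the Harder–Narasimhan property, and the objects of A that are semistable with respect to this stability function are precisely the nonzero objects of the subcategories P(φ) for 0 < φ ≤ 1. -/

import Mathlib

/-!
The Harder–Narasimhan filtrations of `σ` give, for every `c ∈ ℝ`, a triangle `A → X → B` with
`A ∈ P((c,∞))` and `B ∈ P((-∞,c])`, and there are no nonzero maps from `P((c,∞))` to
`P((-∞,c])`; the cuts at the integers form a bounded t-structure with heart `P((0,1])`. The
central charge sends the nonzero objects of `P(I)`, `I ⊆ (0,1]`, into the cone spanned by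
`exp(iπI)`, and these cones are closed under addition: this makes `Z` a stability function on the
heart whose phases on `P(φ)` are `φ`, so HN filtrations of `σ` are HN filtrations of `Z`. A
semistable object has a single HN factor: otherwise the step before its last HN factor is a
subobject of strictly larger phase.
-/

open CategoryTheory CategoryTheory.Limits CategoryTheory.Pretriangulated
open CategoryTheory.Triangulated

universe v u

variable (C : Type u) [Category.{v} C] [HasZeroObject C] [HasShift C ℤ]
  [Preadditive C] [∀ n : ℤ, (CategoryTheory.shiftFunctor C n).Additive] [Pretriangulated C]

/-- A Harder–Narasimhan decomposition of an object `E` with respect to a collection of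
full subcategories `P φ` (`φ : ℝ`). -/
structure HNFiltration (P : ℝ → Set C) (E : C) where
  n : ℕ
  phase : Fin n → ℝ
  phase_strictAnti : StrictAnti phase
  obj : Fin (n + 1) → C
  obj_zero : IsZero (obj 0)
  obj_last : obj (Fin.last n) = E
  fac : Fin n → C
  fac_mem : ∀ j, fac j ∈ P (phase j)
  fac_nonzero : ∀ j, ¬ IsZero (fac j)
  triangle : ∀ j : Fin n, ∃ (f : obj j.castSucc ⟶ obj j.succ) (g : obj j.succ ⟶ fac j)
      (h : fac j ⟶ (obj j.castSucc)⟦(1 : ℤ)⟧), Triangle.mk f g h ∈ distTriang C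

/-- A stability condition `σ = (Z, P)` on a triangulated category `C`. -/
structure StabilityCondition where
  Z : C → ℂ
  P : ℝ → Set C
  additive : ∀ T : Triangle C, (T ∈ distTriang C) → Z T.obj₂ = Z T.obj₁ + Z T.obj₃
  P_iso : ∀ (φ : ℝ) (A B : C), (A ≅ B) → A ∈ P φ → B ∈ P φ
  P_zero : ∀ (φ : ℝ) (A : C), IsZero A → A ∈ P φ
  central : ∀ (φ : ℝ) (E : C), E ∈ P φ → ¬ IsZero E →
      ∃ m : ℝ, 0 < m ∧ Z E = m * Complex.exp (Real.pi * φ * Complex.I)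
  shift : ∀ (φ : ℝ) (E : C), E ∈ P (φ + 1) ↔ E⟦(-1 : ℤ)⟧ ∈ P φ
  hom_zero : ∀ (φ₁ φ₂ : ℝ), φ₂ < φ₁ → ∀ (A B : C), A ∈ P φ₁ → B ∈ P φ₂ →
      ∀ f : A ⟶ B, f = 0
  HN : ∀ E : C, ¬ IsZero E → Nonempty (HNFiltration C P E)

/-- The extension-closed full subcategory `P(I)` of `C` generated by the subcategories
`P(φ)` for `φ ∈ I`. -/
inductive PCat (P : ℝ → Set C) (I : Set ℝ) : C → Prop
  | of (φ : ℝ) (hφ : φ ∈ I) (E : C) (hE : E ∈ P φ) : PCat P I E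
  | zero (E : C) (hE : IsZero E) : PCat P I E
  | iso (E F : C) (e : E ≅ F) (hE : PCat P I E) : PCat P I F
  | ext (A E B : C) (f : A ⟶ E) (g : E ⟶ B) (h : B ⟶ A⟦(1 : ℤ)⟧)
      (hT : Triangle.mk f g h ∈ distTriang C) (hA : PCat P I A) (hB : PCat P I B) :
      PCat P I E

/-- A t-structure is bounded if every object lies in `D^{≤n} ∩ D^{≥m}` for some `m ≤ n`. -/
def TStructureIsBounded (t : TStructure C) : Prop :=
  ∀ X : C, ∃ m n : ℤ, t.le n X ∧ t.ge m X

/-- The heart `D^{≤0} ∩ D^{≥0}` of a t-structure, as a predicate on objects. -/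
def heartP (t : TStructure C) : C → Prop := fun X => t.le 0 X ∧ t.ge 0 X

/-- The phase `φ ∈ (0,1]` of a complex number `z = m·exp(iπφ)` (`m > 0`). -/
noncomputable def phaseOf (z : ℂ) : ℝ := Complex.arg z / Real.pi

/-- `Z` is a stability function on the subcategory `𝒜`: every nonzero object `E` of `𝒜`
satisfies `Z(E) = m·exp(iπφ)` with `m > 0` and `0 < φ ≤ 1`. -/
def IsStabilityFunctionOn (Z : C → ℂ) (𝒜 : C → Prop) : Prop :=
  ∀ E : C, 𝒜 E → ¬ IsZero E → ∃ m φ : ℝ, 0 < m ∧ 0 < φ ∧ φ ≤ 1 ∧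
    Z E = m * Complex.exp (Real.pi * φ * Complex.I)

/-- `E` is semistable with respect to the stability function `Z` on the heart `𝒜`:
`E` is a nonzero object of `𝒜` and every nonzero subobject `A ⊆ E` in `𝒜` (i.e. a
distinguished triangle `A → E → Q` with `A, Q ∈ 𝒜`) has phase `φ(A) ≤ φ(E)`. -/
def SemistableOn (Z : C → ℂ) (𝒜 : C → Prop) (E : C) : Prop :=
  𝒜 E ∧ ¬ IsZero E ∧
  ∀ (A Q : C) (f : A ⟶ E) (g : E ⟶ Q) (h : Q ⟶ A⟦(1 : ℤ)⟧),
    (Triangle.mk f g h ∈ distTriang C) → 𝒜 A → 𝒜 Q → ¬ IsZero A →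
      phaseOf (Z A) ≤ phaseOf (Z E)

/-- `Z` has the Harder–Narasimhan property on the heart `𝒜`: every nonzero object of `𝒜`
has a finite filtration (inside `𝒜`) with semistable factors of strictly decreasing phase. -/
def HasHNPropertyOn (Z : C → ℂ) (𝒜 : C → Prop) : Prop :=
  ∀ E : C, 𝒜 E → ¬ IsZero E → ∃ (n : ℕ) (obj : Fin (n + 1) → C) (fac : Fin n → C),
    IsZero (obj 0) ∧ obj (Fin.last n) = E ∧ (∀ j, 𝒜 (obj j)) ∧
    (∀ j : Fin n, SemistableOn C Z 𝒜 (fac j)) ∧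
    (∀ j : Fin n, ∃ (f : obj j.castSucc ⟶ obj j.succ) (g : obj j.succ ⟶ fac j)
      (h : fac j ⟶ (obj j.castSucc)⟦(1 : ℤ)⟧), Triangle.mk f g h ∈ distTriang C) ∧
    StrictAnti (fun j : Fin n => phaseOf (Z (fac j)))


open Complex Set

def sector : Set ℂ := {z | 0 < z.im ∨ (z.im = 0 ∧ z.re < 0)}

lemma ne_zero_of_mem_sector {z : ℂ} (hz : z ∈ sector) : z ≠ 0 := by
  rintro rfl
  simp [sector] at hz

lemma add_mem_sector {z w : ℂ} (hz : z ∈ sector) (hw : w ∈ sector) : z + w ∈ sector := by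
  simp only [sector, mem_ofPred_eq, add_re, add_im] at *
  rcases hz with hz | ⟨hz, hz'⟩ <;> rcases hw with hw | ⟨hw, hw'⟩
  · exact Or.inl (by linarith)
  · exact Or.inl (by linarith)
  · exact Or.inl (by linarith)
  · exact Or.inr ⟨by linarith, by linarith⟩

lemma arg_pos_of_mem_sector {z : ℂ} (hz : z ∈ sector) : 0 < arg z := by
  rcases hz with hz | ⟨hz, hz'⟩
  · refine (arg_nonneg_iff.2 hz.le).lt_of_ne fun h => ?_
    exact hz.ne' (arg_eq_zero_iff.1 h.symm).2
  · rw [arg_eq_pi_iff.2 ⟨hz', hz⟩]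
    exact Real.pi_pos

lemma phaseOf_mem_Ioc {z : ℂ} (hz : z ∈ sector) : phaseOf z ∈ Ioc 0 1 :=
  ⟨div_pos (arg_pos_of_mem_sector hz) Real.pi_pos,
    div_le_one_of_le₀ (arg_le_pi z) Real.pi_pos.le⟩

lemma norm_mul_exp_phaseOf (z : ℂ) : (‖z‖ : ℂ) * exp (Real.pi * phaseOf z * I) = z := by
  have : (Real.pi : ℂ) * (phaseOf z : ℝ) = arg z := by
    rw [phaseOf, ofReal_div]
    field_simp [ofReal_ne_zero.2 Real.pi_ne_zero]
  rw [this, norm_mul_exp_arg_mul_I]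

lemma ofReal_mul_exp_eq {m φ : ℝ} :
    (m : ℂ) * exp (Real.pi * φ * I) = ⟨m * Real.cos (Real.pi * φ), m * Real.sin (Real.pi * φ)⟩ := by
  apply Complex.ext <;> simp [← ofReal_mul, exp_ofReal_mul_I_re, exp_ofReal_mul_I_im]

lemma phaseOf_ofReal_mul_exp {m φ : ℝ} (hm : 0 < m) (hφ : φ ∈ Ioc 0 1) :
    phaseOf (m * exp (Real.pi * φ * I)) = φ := by
  have hπ := Real.pi_pos
  rw [phaseOf, arg_real_mul _ hm, ← ofReal_mul, arg_exp_mul_I,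
    (toIocMod_eq_self _).2 ⟨by nlinarith [hφ.1], by nlinarith [hφ.2]⟩]
  field_simp

lemma ofReal_mul_exp_mem_sector {m φ : ℝ} (hm : 0 < m) (hφ : φ ∈ Ioc 0 1) :
    (m : ℂ) * exp (Real.pi * φ * I) ∈ sector := by
  have hπ := Real.pi_pos
  rw [ofReal_mul_exp_eq]
  rcases hφ.2.lt_or_eq with h | rfl
  · exact Or.inl (mul_pos hm (Real.sin_pos_of_pos_of_lt_pi (by nlinarith [hφ.1]) (by nlinarith)))
  · exact Or.inr ⟨by simp, by simpa using hm⟩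

lemma mem_sector_iff {z : ℂ} :
    z ∈ sector ↔ ∃ m φ : ℝ, 0 < m ∧ 0 < φ ∧ φ ≤ 1 ∧ z = m * exp (Real.pi * φ * I) := by
  refine ⟨fun hz => ⟨‖z‖, phaseOf z, norm_pos_iff.2 (ne_zero_of_mem_sector hz),
    (phaseOf_mem_Ioc hz).1, (phaseOf_mem_Ioc hz).2, (norm_mul_exp_phaseOf z).symm⟩, ?_⟩
  rintro ⟨m, φ, hm, h0, h1, rfl⟩
  exact ofReal_mul_exp_mem_sector hm ⟨h0, h1⟩

lemma phaseOf_le_phaseOf_iff {z w : ℂ} (hz : z ∈ sector) (hw : w ∈ sector) :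
    phaseOf z ≤ phaseOf w ↔ z.im * w.re ≤ z.re * w.im := by
  have hz0 := norm_pos_iff.2 (ne_zero_of_mem_sector hz)
  have hw0 := norm_pos_iff.2 (ne_zero_of_mem_sector hw)
  have := arg_pos_of_mem_sector hz
  have := arg_pos_of_mem_sector hw
  have := arg_le_pi z
  have := arg_le_pi w
  rw [phaseOf, phaseOf, div_le_div_iff_of_pos_right Real.pi_pos]
  have key : ‖z‖ * ‖w‖ * Real.sin (arg z - arg w) = z.im * w.re - z.re * w.im := by
    rw [Real.sin_sub, sin_arg, cos_arg (ne_zero_of_mem_sector hz), sin_arg,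
      cos_arg (ne_zero_of_mem_sector hw)]
    field_simp
  have hzw : 0 < ‖z‖ * ‖w‖ := mul_pos hz0 hw0
  constructor
  · intro h
    have := Real.sin_nonpos_of_nonpos_of_neg_pi_le (sub_nonpos.2 h) (by nlinarith)
    nlinarith
  · intro h
    by_contra! hlt
    have := Real.sin_pos_of_pos_of_lt_pi (sub_pos.2 hlt) (by nlinarith)
    nlinarith

lemma exists_mem_sector_phaseOf_eq {c : ℝ} (hc : c ∈ Ioc 0 1) : ∃ u ∈ sector, phaseOf u = c :=
  ⟨_, ofReal_mul_exp_mem_sector one_pos hc, phaseOf_ofReal_mul_exp one_pos hc⟩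

lemma phaseOf_add_le {z w : ℂ} {c : ℝ} (hc : c ∈ Ioc 0 1) (hz : z ∈ sector) (hw : w ∈ sector)
    (hzc : phaseOf z ≤ c) (hwc : phaseOf w ≤ c) : phaseOf (z + w) ≤ c := by
  obtain ⟨u, hu, rfl⟩ := exists_mem_sector_phaseOf_eq hc
  rw [phaseOf_le_phaseOf_iff hz hu] at hzc
  rw [phaseOf_le_phaseOf_iff hw hu] at hwc
  rw [phaseOf_le_phaseOf_iff (add_mem_sector hz hw) hu, add_re, add_im]
  linarith

lemma lt_phaseOf_add {z w : ℂ} {c : ℝ} (hc : c ∈ Ioc 0 1) (hz : z ∈ sector) (hw : w ∈ sector)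
    (hzc : c < phaseOf z) (hwc : c < phaseOf w) : c < phaseOf (z + w) := by
  obtain ⟨u, hu, rfl⟩ := exists_mem_sector_phaseOf_eq hc
  rw [← not_le, phaseOf_le_phaseOf_iff hz hu] at hzc
  rw [← not_le, phaseOf_le_phaseOf_iff hw hu] at hwc
  rw [← not_le, phaseOf_le_phaseOf_iff (add_mem_sector hz hw) hu, add_re, add_im]
  linarith

lemma phaseOf_add_lt_left {z w : ℂ} (hz : z ∈ sector) (hw : w ∈ sector)
    (h : phaseOf w < phaseOf z) : phaseOf (z + w) < phaseOf z := by
  rw [← not_le, phaseOf_le_phaseOf_iff hz (add_mem_sector hz hw), add_re, add_im]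
  rw [← not_le, phaseOf_le_phaseOf_iff hz hw] at h
  intro h'
  exact h (by linarith)

section

variable {C}

open ZeroObject

namespace PCat

variable {P : ℝ → Set C}

lemma mono {I J : Set ℝ} (hIJ : I ⊆ J) {X : C} (hX : PCat C P I X) : PCat C P J X := by
  induction hX with
  | of φ hφ E hE => exact .of φ (hIJ hφ) E hE
  | zero E hE => exact .zero E hE
  | iso E F e _ ih => exact .iso E F e ih
  | ext A E B f g h hT _ _ ihA ihB => exact .ext A E B f g h hT ihA ihB

lemma singleton {φ : ℝ} {E : C} (hE : E ∈ P φ) : PCat C P {φ} E :=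
  .of φ (mem_singleton φ) E hE

lemma shift {I J : Set ℝ} (k : ℤ) (hP : ∀ φ ∈ I, ∀ E ∈ P φ, PCat C P J (E⟦k⟧)) {X : C}
    (hX : PCat C P I X) : PCat C P J (X⟦k⟧) := by
  induction hX with
  | of φ hφ E hE => exact hP φ hφ E hE
  | zero E hE => exact .zero _ ((shiftFunctor C k).map_isZero hE)
  | iso E F e _ ih => exact .iso _ _ ((shiftFunctor C k).mapIso e) ih
  | ext A E B f g h hT _ _ ihA ihB =>
    exact .ext _ _ _ _ _ _ (Triangle.shift_distinguished _ hT k) ihA ihB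

end PCat

namespace StabilityCondition

variable (σ : StabilityCondition C)

lemma P_shift_one {φ : ℝ} {E : C} (hE : E ∈ σ.P φ) : E⟦(1 : ℤ)⟧ ∈ σ.P (φ + 1) :=
  (σ.shift φ _).2 <|
    σ.P_iso φ E _ ((shiftFunctorCompIsoId C (1 : ℤ) (-1) (by norm_num)).symm.app E) hE

lemma P_shift_neg_one {φ : ℝ} {E : C} (hE : E ∈ σ.P φ) : E⟦(-1 : ℤ)⟧ ∈ σ.P (φ - 1) :=
  (σ.shift (φ - 1) E).1 (by rwa [sub_add_cancel])

lemma P_shift (k : ℤ) {φ : ℝ} {E : C} (hE : E ∈ σ.P φ) : E⟦k⟧ ∈ σ.P (φ + k) := by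
  induction k using Int.induction_on generalizing φ E with
  | zero => simpa using σ.P_iso φ E _ ((shiftFunctorZero C ℤ).symm.app E) hE
  | succ k ih =>
    have := σ.P_shift_one (ih hE)
    push_cast at this ⊢
    exact σ.P_iso _ _ _ ((shiftFunctorAdd' C (k : ℤ) 1 (k + 1) rfl).symm.app E)
      (by rwa [← add_assoc])
  | pred k ih =>
    have := σ.P_shift_neg_one (ih hE)
    push_cast at this ⊢
    exact σ.P_iso _ _ _ ((shiftFunctorAdd' C (-k : ℤ) (-1) (-k - 1) (by ring)).symm.app E)
      (by rwa [← add_sub_assoc])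

lemma PCat_shift (k : ℤ) {I J : Set ℝ} (hIJ : ∀ φ ∈ I, φ + k ∈ J) {X : C}
    (hX : PCat C σ.P I X) : PCat C σ.P J (X⟦k⟧) :=
  hX.shift k fun φ hφ _ hE => .of _ (hIJ φ hφ) _ (σ.P_shift k hE)

lemma hom_eq_zero_of_mem_P {a : ℝ} {J : Set ℝ} (hJ : ∀ b ∈ J, b < a) {A B : C}
    (hA : A ∈ σ.P a) (hB : PCat C σ.P J B) (f : A ⟶ B) : f = 0 := by
  induction hB with
  | of b hb E hE => exact σ.hom_zero a b (hJ b hb) A E hA hE f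
  | zero E hE => exact hE.eq_of_tgt f 0
  | iso E F e _ ih => simpa using ih (f ≫ e.inv) =≫ e.hom
  | ext B₁ E B₃ f₁ f₂ f₃ hT _ _ ih₁ ih₃ =>
    obtain ⟨g, rfl⟩ := Triangle.coyoneda_exact₂ _ hT f (ih₃ _)
    rw [ih₁ g]
    exact zero_comp

lemma hom_eq_zero {I J : Set ℝ} (hIJ : ∀ a ∈ I, ∀ b ∈ J, b < a) {A B : C}
    (hA : PCat C σ.P I A) (hB : PCat C σ.P J B) (f : A ⟶ B) : f = 0 := by
  induction hA with
  | of a ha E hE => exact σ.hom_eq_zero_of_mem_P (hIJ a ha) hE hB f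
  | zero E hE => exact hE.eq_of_src f 0
  | iso E F e _ ih => simpa using e.inv ≫= ih (e.hom ≫ f)
  | ext A₁ E A₃ f₁ f₂ f₃ hT _ _ ih₁ ih₃ =>
    obtain ⟨g, rfl⟩ := Triangle.yoneda_exact₂ _ hT f (ih₁ _)
    rw [ih₃ g]
    exact comp_zero

lemma Z_zero : σ.Z (0 : C) = 0 := by
  simpa using σ.additive _ (contractible_distinguished (0 : C))

lemma Z_eq_of_iso {A B : C} (e : A ≅ B) : σ.Z A = σ.Z B := by
  have hT : Triangle.mk e.hom (0 : B ⟶ 0) 0 ∈ distTriang C :=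
    (Triangle.distinguished_iff_of_isZero₃ _ (isZero_zero C)).2 (inferInstanceAs (IsIso e.hom))
  simpa [σ.Z_zero] using (σ.additive _ hT).symm

lemma Z_eq_zero {A : C} (hA : IsZero A) : σ.Z A = 0 := by
  rw [σ.Z_eq_of_iso hA.isoZero, σ.Z_zero]

lemma Z_mem_of_PCat {S : Set ℂ} (hS : ∀ z ∈ S, ∀ w ∈ S, z + w ∈ S) {I : Set ℝ}
    (hP : ∀ φ ∈ I, ∀ E ∈ σ.P φ, ¬ IsZero E → σ.Z E ∈ S) {X : C} (hX : PCat C σ.P I X)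
    (hX0 : ¬ IsZero X) : σ.Z X ∈ S := by
  induction hX with
  | of φ hφ E hE => exact hP φ hφ E hE hX0
  | zero E hE => exact absurd hE hX0
  | iso E F e _ ih => exact σ.Z_eq_of_iso e ▸ ih fun hE => hX0 (hE.of_iso e.symm)
  | ext A E B f g h hT _ _ ihA ihB =>
    rw [show σ.Z E = σ.Z A + σ.Z B from σ.additive _ hT]
    by_cases hA : IsZero A
    · by_cases hB : IsZero B
      · exact absurd (Triangle.isZero₂_of_isZero₁₃ _ hT hA hB) hX0
      · rw [σ.Z_eq_zero hA, zero_add]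
        exact ihB hB
    · by_cases hB : IsZero B
      · rw [σ.Z_eq_zero hB, add_zero]
        exact ihA hA
      · exact hS _ (ihA hA) _ (ihB hB)

lemma Z_mem_sector_of_mem_P {φ : ℝ} (hφ : φ ∈ Ioc 0 1) {E : C} (hE : E ∈ σ.P φ)
    (hE0 : ¬ IsZero E) : σ.Z E ∈ sector := by
  obtain ⟨m, hm, hZ⟩ := σ.central φ E hE hE0
  exact hZ ▸ ofReal_mul_exp_mem_sector hm hφ

lemma phaseOf_Z_of_mem_P {φ : ℝ} (hφ : φ ∈ Ioc 0 1) {E : C} (hE : E ∈ σ.P φ)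
    (hE0 : ¬ IsZero E) : phaseOf (σ.Z E) = φ := by
  obtain ⟨m, hm, hZ⟩ := σ.central φ E hE hE0
  exact hZ ▸ phaseOf_ofReal_mul_exp hm hφ

lemma Z_mem_sector {I : Set ℝ} (hI : I ⊆ Ioc 0 1) {X : C} (hX : PCat C σ.P I X)
    (hX0 : ¬ IsZero X) : σ.Z X ∈ sector :=
  σ.Z_mem_of_PCat (fun _ hz _ hw => add_mem_sector hz hw)
    (fun _ hφ _ hE hE0 => σ.Z_mem_sector_of_mem_P (hI hφ) hE hE0) hX hX0

lemma phaseOf_Z_le {c : ℝ} (hc : c ∈ Ioc 0 1) {X : C} (hX : PCat C σ.P (Ioc 0 c) X)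
    (hX0 : ¬ IsZero X) : phaseOf (σ.Z X) ≤ c :=
  (σ.Z_mem_of_PCat (S := {z | z ∈ sector ∧ phaseOf z ≤ c})
    (fun _ hz _ hw => ⟨add_mem_sector hz.1 hw.1, phaseOf_add_le hc hz.1 hw.1 hz.2 hw.2⟩)
    (fun _ hφ _ hE hE0 => have hφ' : _ ∈ Ioc (0 : ℝ) 1 := ⟨hφ.1, hφ.2.trans hc.2⟩
      ⟨σ.Z_mem_sector_of_mem_P hφ' hE hE0, σ.phaseOf_Z_of_mem_P hφ' hE hE0 ▸ hφ.2⟩) hX hX0).2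

lemma lt_phaseOf_Z {c : ℝ} (hc : c ∈ Ioc 0 1) {X : C} (hX : PCat C σ.P (Ioc c 1) X)
    (hX0 : ¬ IsZero X) : c < phaseOf (σ.Z X) :=
  (σ.Z_mem_of_PCat (S := {z | z ∈ sector ∧ c < phaseOf z})
    (fun _ hz _ hw => ⟨add_mem_sector hz.1 hw.1, lt_phaseOf_add hc hz.1 hw.1 hz.2 hw.2⟩)
    (fun _ hφ _ hE hE0 => have hφ' : _ ∈ Ioc (0 : ℝ) 1 := ⟨hc.1.trans hφ.1, hφ.2⟩
      ⟨σ.Z_mem_sector_of_mem_P hφ' hE hE0, σ.phaseOf_Z_of_mem_P hφ' hE hE0 ▸ hφ.1⟩) hX hX0).2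

end StabilityCondition

namespace HNFiltration

section

variable {P : ℝ → Set C} {E : C} (F : HNFiltration C P E)

def ofIsZero (hE : IsZero E) : HNFiltration C P E where
  n := 0
  phase := Fin.elim0
  phase_strictAnti := fun j => j.elim0
  obj := fun _ => E
  obj_zero := hE
  obj_last := rfl
  fac := Fin.elim0
  fac_mem := fun j => j.elim0
  fac_nonzero := fun j => j.elim0
  triangle := fun j => j.elim0

def first (hn : 0 < F.n) : Fin F.n := ⟨0, hn⟩

def last (hn : 0 < F.n) : Fin F.n := ⟨F.n - 1, Nat.sub_one_lt_of_lt hn⟩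

lemma phase_le_phase_first (j : Fin F.n) : F.phase j ≤ F.phase (F.first j.pos) :=
  F.phase_strictAnti.antitone (Nat.zero_le _)

lemma phase_last_le_phase (j : Fin F.n) : F.phase (F.last j.pos) ≤ F.phase j :=
  F.phase_strictAnti.antitone (Nat.le_sub_one_of_lt j.isLt)

lemma succ_last (hn : 0 < F.n) : (F.last hn).succ = Fin.last F.n := by
  ext
  simp only [last, Fin.val_succ, Fin.val_last]
  omega

lemma n_pos (hE : ¬ IsZero E) : 0 < F.n := by
  refine Nat.pos_of_ne_zero fun hn => hE ?_
  have : (0 : Fin (F.n + 1)) = Fin.last F.n := by ext; simp [hn]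
  exact F.obj_last ▸ this ▸ F.obj_zero

lemma obj_mem {I : Set ℝ} (k : Fin (F.n + 1))
    (hI : ∀ j : Fin F.n, j.castSucc < k → F.phase j ∈ I) : PCat C P I (F.obj k) := by
  induction k using Fin.induction with
  | zero => exact .zero _ F.obj_zero
  | succ i ih =>
    obtain ⟨f, g, h, hT⟩ := F.triangle i
    exact .ext _ _ _ f g h hT (ih fun j hj => hI j (hj.trans Fin.castSucc_lt_succ))
      (.of _ (hI i Fin.castSucc_lt_succ) _ (F.fac_mem i))

lemma mem_PCat {I : Set ℝ} (hI : ∀ j, F.phase j ∈ I) : PCat C P I E :=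
  F.obj_last ▸ F.obj_mem (Fin.last F.n) fun j _ => hI j

lemma exists_triangle_last (hn : 0 < F.n) :
    ∃ (f : F.obj (F.last hn).castSucc ⟶ E) (g : E ⟶ F.fac (F.last hn))
      (h : F.fac (F.last hn) ⟶ (F.obj (F.last hn).castSucc)⟦(1 : ℤ)⟧),
      Triangle.mk f g h ∈ distTriang C := by
  have := F.triangle (F.last hn)
  rwa [F.succ_last, F.obj_last] at this

end

section

variable {σ : StabilityCondition C} {X : C} (F : HNFiltration C σ.P X)

lemma exists_ne_zero_fac_first_to_obj (hn : 0 < F.n) (k : Fin F.n) :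
    ∃ s : F.fac (F.first hn) ⟶ F.obj k.succ, s ≠ 0 := by
  obtain ⟨k, hk⟩ := k
  induction k with
  | zero =>
    obtain ⟨f, g, h, hT⟩ := F.triangle (F.first hn)
    have : IsIso g := (Triangle.isZero₁_iff_isIso₂ _ hT).1 F.obj_zero
    refine ⟨(asIso g).inv, fun h0 => F.fac_nonzero (F.first hn) ?_⟩
    rw [IsZero.iff_id_eq_zero, ← (asIso g).inv_hom_id, h0]
    exact zero_comp
  | succ k ih =>
    obtain ⟨s, hs⟩ := ih (by omega)
    obtain ⟨f, g, h, hT⟩ := F.triangle ⟨k + 1, hk⟩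
    refine ⟨s ≫ f, fun h0 => hs ?_⟩
    obtain ⟨w, rfl⟩ := Triangle.coyoneda_exact₂ _ (inv_rot_of_distTriang _ hT) s h0
    have : F.phase ⟨k + 1, hk⟩ - 1 < F.phase (F.first hn) := by
      linarith [F.phase_le_phase_first ⟨k + 1, hk⟩]
    rw [σ.hom_zero _ _ this _ _ (F.fac_mem _) (σ.P_shift_neg_one (F.fac_mem _)) w]
    exact zero_comp

lemma exists_ne_zero_fac_first_to (hn : 0 < F.n) : ∃ s : F.fac (F.first hn) ⟶ X, s ≠ 0 := by
  have := F.exists_ne_zero_fac_first_to_obj hn (F.last hn)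
  rwa [F.succ_last, F.obj_last] at this

lemma exists_ne_zero_to_fac_last (hn : 0 < F.n) : ∃ s : X ⟶ F.fac (F.last hn), s ≠ 0 := by
  obtain ⟨f, g, h, hT⟩ := F.exists_triangle_last hn
  refine ⟨g, fun hg => F.fac_nonzero (F.last hn) ?_⟩
  obtain ⟨w, hw⟩ := Triangle.yoneda_exact₃ _ hT (𝟙 _) (by rw [hg]; exact zero_comp)
  have hobj : PCat C σ.P (Ici (F.phase (F.last hn) + 1)) ((F.obj (F.last hn).castSucc)⟦(1 : ℤ)⟧) :=
    σ.PCat_shift 1 (I := Ici (F.phase (F.last hn))) (fun φ hφ => by simpa using hφ)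
      (F.obj_mem _ fun j _ => F.phase_last_le_phase j)
  have hw0 := σ.hom_eq_zero (fun a ha b hb => by rw [hb]; linarith [mem_Ici.1 ha]) hobj
    (.singleton (F.fac_mem _)) w
  exact (IsZero.iff_id_eq_zero _).2 (hw.trans (by rw [hw0]; exact comp_zero))

lemma phase_le_of_forall_hom_eq_zero {c : ℝ}
    (hX : ∀ ψ, c < ψ → ∀ S ∈ σ.P ψ, ∀ s : S ⟶ X, s = 0) (j : Fin F.n) : F.phase j ≤ c := by
  have hn : 0 < F.n := j.pos
  refine (F.phase_le_phase_first j).trans (not_lt.1 fun hc => ?_)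
  obtain ⟨s, hs⟩ := F.exists_ne_zero_fac_first_to hn
  exact hs (hX _ hc _ (F.fac_mem _) s)

lemma phase_le_of_mem_Iic {b : ℝ} (hX : PCat C σ.P (Iic b) X) (j : Fin F.n) : F.phase j ≤ b :=
  F.phase_le_of_forall_hom_eq_zero
    (fun _ hψ _ hS s => σ.hom_eq_zero_of_mem_P (fun _ hb => lt_of_le_of_lt hb hψ) hS hX s) j

lemma lt_phase_of_mem_Ioi {a : ℝ} (hX : PCat C σ.P (Ioi a) X) (j : Fin F.n) : a < F.phase j := by
  have hn : 0 < F.n := j.pos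
  refine lt_of_lt_of_le (not_le.1 fun ha => ?_) (F.phase_last_le_phase j)
  obtain ⟨s, hs⟩ := F.exists_ne_zero_to_fac_last hn
  exact hs (σ.hom_eq_zero (fun _ ha' _ hb => by rw [hb]; exact ha.trans_lt ha') hX
    (.singleton (F.fac_mem _)) s)

lemma phase_mem_Ioc {a b : ℝ} (hX : PCat C σ.P (Ioc a b) X) (j : Fin F.n) :
    F.phase j ∈ Ioc a b :=
  ⟨F.lt_phase_of_mem_Ioi (hX.mono Ioc_subset_Ioi_self) j,
    F.phase_le_of_mem_Iic (hX.mono Ioc_subset_Iic_self) j⟩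

end

end HNFiltration

namespace StabilityCondition

variable (σ : StabilityCondition C)

lemma nonempty_HNFiltration (X : C) : Nonempty (HNFiltration C σ.P X) := by
  by_cases hX : IsZero X
  · exact ⟨.ofIsZero hX⟩
  · exact σ.HN X hX

lemma mem_Ioc_of_mem_Ioi_of_mem_Iic {a b : ℝ} {X : C} (ha : PCat C σ.P (Ioi a) X)
    (hb : PCat C σ.P (Iic b) X) : PCat C σ.P (Ioc a b) X := by
  obtain ⟨F⟩ := σ.nonempty_HNFiltration X
  exact F.mem_PCat fun j => ⟨F.lt_phase_of_mem_Ioi ha j, F.phase_le_of_mem_Iic hb j⟩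

lemma mem_Iic_of_forall_hom_eq_zero {c : ℝ} {Y : C}
    (hY : ∀ ψ, c < ψ → ∀ S ∈ σ.P ψ, ∀ s : S ⟶ Y, s = 0) : PCat C σ.P (Iic c) Y := by
  obtain ⟨F⟩ := σ.nonempty_HNFiltration Y
  exact F.mem_PCat (F.phase_le_of_forall_hom_eq_zero hY)

/-- Over a triangulated category the octahedral axiom would exhibit `Q` as an extension of `B` by
`F`; here `Q ∈ P((-∞,c])` is read off from `Hom(P(ψ), Q) = 0` for `ψ > c`. -/
lemma cone_comp_mem_Iic {c φ : ℝ} (hφ : φ ≤ c) {A X' B X F Q : C}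
    {a : A ⟶ X'} {b : X' ⟶ B} {e : B ⟶ A⟦(1 : ℤ)⟧} (hT₁ : Triangle.mk a b e ∈ distTriang C)
    {f : X' ⟶ X} {g : X ⟶ F} {h : F ⟶ X'⟦(1 : ℤ)⟧} (hT₂ : Triangle.mk f g h ∈ distTriang C)
    {q : X ⟶ Q} {r : Q ⟶ A⟦(1 : ℤ)⟧} (hT₃ : Triangle.mk (a ≫ f) q r ∈ distTriang C)
    (hB : PCat C σ.P (Iic c) B) (hF : F ∈ σ.P φ) : PCat C σ.P (Iic c) Q := by
  obtain ⟨u, hu, -⟩ : ∃ u : B ⟶ Q, b ≫ u = f ≫ q ∧ _ :=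
    complete_distinguished_triangle_morphism _ _ hT₁ hT₃ (𝟙 A) f (Category.id_comp _).symm
  obtain ⟨v, -, hv⟩ : ∃ v : Q ⟶ F, _ ∧ r ≫ a⟦(1 : ℤ)⟧' = v ≫ h :=
    complete_distinguished_triangle_morphism _ _ hT₃ hT₂ a (𝟙 X) (Category.comp_id _)
  refine σ.mem_Iic_of_forall_hom_eq_zero fun ψ hψ S hS s => ?_
  have to_F : ∀ t : S ⟶ F, t = 0 := σ.hom_zero ψ φ (hφ.trans_lt hψ) S F hS hF
  have to_B : ∀ t : S ⟶ B, t = 0 :=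
    σ.hom_eq_zero_of_mem_P (fun _ hb => lt_of_le_of_lt hb hψ) hS hB
  have hsr : s ≫ r = 0 := by
    have : (s ≫ r) ≫ (-a⟦(1 : ℤ)⟧') = 0 := by
      rw [Preadditive.comp_neg, Category.assoc, hv, ← Category.assoc, to_F (s ≫ v), zero_comp,
        neg_zero]
    obtain ⟨w, hw⟩ := Triangle.coyoneda_exact₃ _ (rot_of_distTriang _ hT₁) (s ≫ r) this
    exact hw.trans (by rw [to_B w]; exact zero_comp)
  obtain ⟨s₀, rfl⟩ : ∃ s₀ : S ⟶ X, s = s₀ ≫ q := Triangle.coyoneda_exact₃ _ hT₃ s hsr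
  obtain ⟨s₁, rfl⟩ : ∃ s₁ : S ⟶ X', s₀ = s₁ ≫ f :=
    Triangle.coyoneda_exact₂ _ hT₂ s₀ (to_F _)
  rw [Category.assoc, ← hu, ← Category.assoc, to_B (s₁ ≫ b), zero_comp]

lemma exists_mem_Icc (X : C) : ∃ b : ℝ, PCat C σ.P (Icc (-b) b) X := by
  obtain ⟨F⟩ := σ.nonempty_HNFiltration X
  exact ⟨∑ j, |F.phase j|, F.mem_PCat fun j => abs_le.1 <|
    Finset.single_le_sum (f := fun j => |F.phase j|) (fun _ _ => abs_nonneg _) (Finset.mem_univ j)⟩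

lemma exists_triangle_Ioi_Iic (c : ℝ) {X : C} (F : HNFiltration C σ.P X) (k : Fin (F.n + 1)) :
    ∃ (A B : C) (f : A ⟶ F.obj k) (g : F.obj k ⟶ B) (h : B ⟶ A⟦(1 : ℤ)⟧),
      Triangle.mk f g h ∈ distTriang C ∧ PCat C σ.P (Ioi c) A ∧ PCat C σ.P (Iic c) B := by
  induction k using Fin.induction with
  | zero => exact ⟨_, 0, 𝟙 _, 0, 0, contractible_distinguished _, .zero _ F.obj_zero,
      .zero _ (isZero_zero C)⟩
  | succ i ih =>
    by_cases hci : c < F.phase i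
    · refine ⟨_, 0, 𝟙 _, 0, 0, contractible_distinguished _, F.obj_mem _ fun j hj => ?_,
        .zero _ (isZero_zero C)⟩
      exact hci.trans_le (F.phase_strictAnti.antitone (Fin.castSucc_lt_succ_iff.1 hj))
    · obtain ⟨A, B, a, b, e, hT₁, hA, hB⟩ := ih
      obtain ⟨f, g, h, hT₂⟩ := F.triangle i
      obtain ⟨Q, q, r, hT₃⟩ := distinguished_cocone_triangle (a ≫ f)
      exact ⟨A, Q, a ≫ f, q, r, hT₃, hA,
        σ.cone_comp_mem_Iic (not_lt.1 hci) hT₁ hT₂ hT₃ hB (F.fac_mem i)⟩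

def tStructure : TStructure C where
  le n := PCat C σ.P (Ioi (-n))
  ge n := PCat C σ.P (Iic (1 - n))
  le_isClosedUnderIsomorphisms _ := ⟨fun e hX => .iso _ _ e hX⟩
  ge_isClosedUnderIsomorphisms _ := ⟨fun e hX => .iso _ _ e hX⟩
  le_shift n a n' h X hX := σ.PCat_shift a (fun φ hφ => by
    have : (a : ℝ) + n' = n := by exact_mod_cast h
    simp only [mem_Ioi] at hφ ⊢
    linarith) hX
  ge_shift n a n' h X hX := σ.PCat_shift a (fun φ hφ => by
    have : (a : ℝ) + n' = n := by exact_mod_cast h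
    simp only [mem_Iic] at hφ ⊢
    linarith) hX
  zero' X Y f hX hY := σ.hom_eq_zero (fun a ha b hb => by
    simp only [mem_Ioi, mem_Iic, Int.cast_zero, Int.cast_one] at ha hb
    linarith) hX hY f
  le_zero_le X hX := hX.mono fun φ hφ => by
    simp only [mem_Ioi, Int.cast_zero, Int.cast_one] at hφ ⊢
    linarith
  ge_one_le X hX := hX.mono fun φ hφ => by
    simp only [mem_Iic, Int.cast_zero, Int.cast_one] at hφ ⊢
    linarith
  exists_triangle_zero_one X := by
    obtain ⟨F⟩ := σ.nonempty_HNFiltration X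
    obtain ⟨A, B, f, g, h, hT, hA, hB⟩ := F.obj_last ▸ σ.exists_triangle_Ioi_Iic 0 F (Fin.last F.n)
    exact ⟨A, B, hA.mono fun φ hφ => by simpa using hφ, hB.mono fun φ hφ => by simpa using hφ,
      f, g, h, hT⟩

lemma tStructure_isBounded : TStructureIsBounded C σ.tStructure := by
  intro X
  obtain ⟨b, hb⟩ := σ.exists_mem_Icc X
  refine ⟨-⌈b⌉, ⌈b⌉ + 1, hb.mono fun φ hφ => ?_, hb.mono fun φ hφ => ?_⟩
  · have := Int.le_ceil b
    simp only [mem_Ioi, mem_Icc] at hφ ⊢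
    push_cast
    linarith
  · have := Int.le_ceil b
    simp only [mem_Iic, mem_Icc] at hφ ⊢
    push_cast
    linarith

lemma heartP_tStructure_iff (X : C) : heartP C σ.tStructure X ↔ PCat C σ.P (Ioc 0 1) X := by
  have hle : σ.tStructure.le 0 = PCat C σ.P (Ioi 0) := by simp [tStructure]
  have hge : σ.tStructure.ge 0 = PCat C σ.P (Iic 1) := by simp [tStructure]
  rw [heartP, hle, hge]
  exact ⟨fun h => σ.mem_Ioc_of_mem_Ioi_of_mem_Iic h.1 h.2,
    fun h => ⟨h.mono Ioc_subset_Ioi_self, h.mono Ioc_subset_Iic_self⟩⟩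

lemma isStabilityFunctionOn : IsStabilityFunctionOn C σ.Z (PCat C σ.P (Ioc 0 1)) :=
  fun _ hE hE0 => mem_sector_iff.1 (σ.Z_mem_sector subset_rfl hE hE0)

lemma semistableOn_of_mem_P {φ : ℝ} (hφ : φ ∈ Ioc 0 1) {E : C} (hE : E ∈ σ.P φ)
    (hE0 : ¬ IsZero E) : SemistableOn C σ.Z (PCat C σ.P (Ioc 0 1)) E := by
  refine ⟨.of φ hφ E hE, hE0, fun A Q f g h hT hA hQ hA0 => ?_⟩
  rw [σ.phaseOf_Z_of_mem_P hφ hE hE0]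
  refine σ.phaseOf_Z_le hφ (σ.mem_Ioc_of_mem_Ioi_of_mem_Iic (hA.mono Ioc_subset_Ioi_self)
    (σ.mem_Iic_of_forall_hom_eq_zero fun ψ hψ S hS s => ?_)) hA0
  obtain ⟨w, rfl⟩ : ∃ w : S ⟶ Q⟦(-1 : ℤ)⟧, s = w ≫ _ := Triangle.coyoneda_exact₂ _
    (inv_rot_of_distTriang _ hT) s (σ.hom_zero ψ φ hψ S E hS hE _)
  have hQ' : PCat C σ.P (Ioc (-1) 0) (Q⟦(-1 : ℤ)⟧) := σ.PCat_shift (-1) (fun t ht => by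
    simp only [mem_Ioc, Int.cast_neg, Int.cast_one] at ht ⊢
    constructor <;> linarith) hQ
  rw [σ.hom_eq_zero_of_mem_P (fun b hb => hb.2.trans_lt (hφ.1.trans hψ)) hS hQ' w]
  exact zero_comp

lemma mem_P_of_semistableOn {E : C} (hE : SemistableOn C σ.Z (PCat C σ.P (Ioc 0 1)) E) :
    ∃ φ : ℝ, 0 < φ ∧ φ ≤ 1 ∧ E ∈ σ.P φ := by
  obtain ⟨hE𝒜, hE0, hss⟩ := hE
  obtain ⟨F⟩ := σ.HN E hE0
  have hn := F.n_pos hE0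
  have hph := F.phase_mem_Ioc hE𝒜
  set k := F.last hn
  obtain ⟨f, g, h, hT⟩ := F.exists_triangle_last hn
  by_cases hA0 : IsZero (F.obj k.castSucc)
  · have : IsIso g := (Triangle.isZero₁_iff_isIso₂ _ hT).1 hA0
    exact ⟨F.phase k, (hph k).1, (hph k).2, σ.P_iso _ _ _ (asIso g).symm (F.fac_mem k)⟩
  have hA : PCat C σ.P (Ioc (F.phase k) 1) (F.obj k.castSucc) :=
    F.obj_mem _ fun j hj => ⟨F.phase_strictAnti (Fin.castSucc_lt_castSucc_iff.1 hj), (hph j).2⟩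
  have hZE : σ.Z E = σ.Z (F.obj k.castSucc) + σ.Z (F.fac k) := σ.additive _ hT
  have hle := hss _ _ f g h hT (hA.mono (Ioc_subset_Ioc_left (hph k).1.le))
    (.of _ (hph k) _ (F.fac_mem k)) hA0
  rw [hZE] at hle
  refine absurd hle (not_le.2 (phaseOf_add_lt_left ?_ ?_ ?_))
  · exact σ.Z_mem_sector (Ioc_subset_Ioc_left (hph k).1.le) hA hA0
  · exact σ.Z_mem_sector_of_mem_P (hph k) (F.fac_mem k) (F.fac_nonzero k)
  · rw [σ.phaseOf_Z_of_mem_P (hph k) (F.fac_mem k) (F.fac_nonzero k)]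
    exact σ.lt_phaseOf_Z (hph k) hA hA0

lemma hasHNPropertyOn : HasHNPropertyOn C σ.Z (PCat C σ.P (Ioc 0 1)) := by
  intro E hE hE0
  obtain ⟨F⟩ := σ.HN E hE0
  have hph := F.phase_mem_Ioc hE
  have hZ : (fun j => phaseOf (σ.Z (F.fac j))) = F.phase := funext fun j =>
    σ.phaseOf_Z_of_mem_P (hph j) (F.fac_mem j) (F.fac_nonzero j)
  exact ⟨F.n, F.obj, F.fac, F.obj_zero, F.obj_last, fun k => F.obj_mem k fun j _ => hph j,
    fun j => σ.semistableOn_of_mem_P (hph j) (F.fac_mem j) (F.fac_nonzero j), F.triangle,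
    hZ ▸ F.phase_strictAnti⟩

lemma semistableOn_iff (E : C) : SemistableOn C σ.Z (PCat C σ.P (Ioc 0 1)) E ↔
    ∃ φ : ℝ, 0 < φ ∧ φ ≤ 1 ∧ E ∈ σ.P φ ∧ ¬ IsZero E := by
  refine ⟨fun hE => ?_, fun ⟨φ, h0, h1, hE, hE0⟩ => σ.semistableOn_of_mem_P ⟨h0, h1⟩ hE hE0⟩
  obtain ⟨φ, h0, h1, hφ⟩ := σ.mem_P_of_semistableOn hE
  exact ⟨φ, h0, h1, hφ, hE.2.1⟩

end StabilityCondition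

end

/-- Proposition 5.3 of the paper, one direction: given a stability condition `σ = (Z,P)`,
the subcategory `𝒜 = P((0,1])` is the heart of a bounded t-structure on `C`, the central
charge `Z` is a stability function on `𝒜` with the Harder–Narasimhan property, and the
`Z`-semistable objects of `𝒜` are exactly the nonzero objects of the `P(φ)` with
`0 < φ ≤ 1`. -/
theorem stabilityCondition_gives_heart_and_stability_function
    (σ : StabilityCondition C) :
    (∃ t : TStructure C, TStructureIsBounded C t ∧
      ∀ X : C, heartP C t X ↔ PCat C σ.P (Set.Ioc 0 1) X) ∧
    IsStabilityFunctionOn C σ.Z (PCat C σ.P (Set.Ioc 0 1)) ∧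
    HasHNPropertyOn C σ.Z (PCat C σ.P (Set.Ioc 0 1)) ∧
    (∀ E : C, SemistableOn C σ.Z (PCat C σ.P (Set.Ioc 0 1)) E ↔
      ∃ φ : ℝ, 0 < φ ∧ φ ≤ 1 ∧ E ∈ σ.P φ ∧ ¬ IsZero E) :=
  ⟨⟨σ.tStructure, σ.tStructure_isBounded, σ.heartP_tStructure_iff⟩, σ.isStabilityFunctionOn,
    σ.hasHNPropertyOn, σ.semistableOn_iff⟩
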